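/- arXiv:1606.08039 — 3 statements merged into one kernel-verified Lean document; each statement's English description precedes it below -/
import Mathlib

section
/- Let G be a finite abelian group with r(G) ≥ 2. Then [1, r(G) − 1] ⊆ Δ*(G). -/
/- Common definitions for zero-sum theory over a finite abelian group. -/

variable {G : Type*} [AddCommGroup G]

/-- `S` is a zero-sum sequence over the subset `G₀`:
a finite multiset of elements of `G₀` whose sum is `0`. -/
def IsZeroSumSeq (G₀ : Set G) (S : Multiset G) : Prop :=
  (∀ g ∈ S, g ∈ G₀) ∧ S.sum = 0

/-- `A` is an atom (minimal zero-sum sequence) over `G₀`: a nonempty zero-sum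
sequence over `G₀` that cannot be written as the union of two nonempty
zero-sum sequences, i.e. has no proper nonempty zero-sum subsequence. -/
def IsAtomOver (G₀ : Set G) (A : Multiset G) : Prop :=
  IsZeroSumSeq G₀ A ∧ A ≠ 0 ∧
    ∀ B : Multiset G, B ≤ A → B ≠ 0 → B ≠ A → B.sum ≠ 0

/-- The set of lengths `L(B)` of a zero-sum sequence `B` over `G₀`: all `k`
such that `B` is a union of `k` atoms over `G₀`. -/
def lengthSet (G₀ : Set G) (B : Multiset G) : Set ℕ :=
  { k | ∃ f : Multiset (Multiset G), f.card = k ∧ (∀ A ∈ f, IsAtomOver G₀ A) ∧ f.sum = B }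

/-- The set of successive distances `Δ(L)` of a set `L ⊆ ℕ`. -/
def distSet (L : Set ℕ) : Set ℕ :=
  { d | ∃ a ∈ L, ∃ b ∈ L, a < b ∧ b - a = d ∧ ∀ c ∈ L, a < c → c < b → False }

/-- The set of distances `Δ(G₀)`: union of `Δ(L(B))` over all nonempty
zero-sum sequences `B` over `G₀`. -/
def DeltaOf (G₀ : Set G) : Set ℕ :=
  ⋃ B : Multiset G, ⋃ (_ : B ≠ 0), distSet (lengthSet G₀ B)

/-- The set of minimal distances `Δ*(G) = { min Δ(G₀) : G₀ ⊆ G, Δ(G₀) ≠ ∅ }`. -/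
def DeltaStar (G : Type*) [AddCommGroup G] : Set ℕ :=
  { d | ∃ G₀ : Set G, (DeltaOf G₀).Nonempty ∧ sInf (DeltaOf G₀) = d }

/-- The cross number `k(S) = Σ_{g ∈ S} 1/ord(g)` (with multiplicity). -/
noncomputable def crossNumber (S : Multiset G) : ℚ :=
  (S.map fun g => ((addOrderOf g : ℚ))⁻¹).sum

/-- `G₀` is an LCN-set: every atom over `G₀` has cross number at least `1`. -/
def IsLCNSet (G₀ : Set G) : Prop :=
  ∀ A : Multiset G, IsAtomOver G₀ A → 1 ≤ crossNumber A

/-- `r` is the rank of the finite abelian group `G`: the number of summands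
in the invariant factor decomposition `G ≅ C_{n₁} ⊕ ... ⊕ C_{n_r}` with
`1 < n₁ ∣ n₂ ∣ ... ∣ n_r`. -/
def IsRank (G : Type*) [AddCommGroup G] (r : ℕ) : Prop :=
  ∃ d : Fin r → ℕ, (∀ i, 1 < d i) ∧ (∀ i j, i ≤ j → d i ∣ d j) ∧
    Nonempty (G ≃+ ((i : Fin r) → ZMod (d i)))

/-- The system of sets of lengths `𝓛(G) = { L(B) : B ∈ 𝓑(G) nonempty }`. -/
def LSystem (G : Type*) [AddCommGroup G] : Set (Set ℕ) :=
  { L | ∃ B : Multiset G, B ≠ 0 ∧ IsZeroSumSeq (Set.univ : Set G) B ∧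
      lengthSet (Set.univ : Set G) B = L }

/-- `d` is the greatest common divisor of the set `S ⊆ ℕ`. -/
def IsSetGcd (S : Set ℕ) (d : ℕ) : Prop :=
  (∀ s ∈ S, d ∣ s) ∧ ∀ e : ℕ, (∀ s ∈ S, e ∣ s) → e ∣ d

/-
Let `e₁, …, e_m` be independent elements of common order `p ≥ 2`; for `m ≤ r(G)` they exist, taking
`p = n₁` and `eᵢ` of order `p` in the `i`-th invariant factor. Put `e₀ = e₁ + ⋯ + e_m` and
`G₀ = {e₀, e₁, …, e_m}`. A sequence over `G₀` is zero-sum iff `p` divides `v_{e₀} + v_{eᵢ}` for every `i`,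
so an atom over `G₀` is either `eᵢ^p` or `e₀^a (e₁ ⋯ e_m)^(p-a)` with `1 ≤ a ≤ p`. Weighting `e₀` by `m`
and each `eᵢ` by `1`, every atom has weight `p` or `m p`, both `≡ p mod p (m - 1)`; hence any two
factorization lengths of one sequence differ by a multiple of `m - 1`. Since
`(e₀ (e₁ ⋯ e_m)^(p-1))² = e₀² (e₁ ⋯ e_m)^(p-2) · e₁^p ⋯ e_m^p` has lengths `2` and `m + 1`,
`min Δ(G₀) = m - 1`, and `m` ranges over `[2, r(G)]`.
-/

open Finset Function

theorem IsAtomOver.eq_of_le {G₀ : Set G} {A B : Multiset G} (hA : IsAtomOver G₀ A)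
    (hBA : B ≤ A) (hB : B ≠ 0) (hBs : B.sum = 0) : B = A :=
  by_contra fun h => hA.2.2 B hBA hB h hBs

theorem pos_of_mem_DeltaOf {G₀ : Set G} {d : ℕ} (hd : d ∈ DeltaOf G₀) : 0 < d := by
  simp only [DeltaOf, Set.mem_iUnion] at hd
  obtain ⟨_, _, a, _, b, _, hab, rfl, _⟩ := hd
  omega

theorem mem_DeltaStar_of_forall_dvd (G₀ : Set G) {d : ℕ} (hd : d ∈ DeltaOf G₀)
    (hdvd : ∀ d' ∈ DeltaOf G₀, d ∣ d') : d ∈ DeltaStar G :=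
  ⟨G₀, ⟨d, hd⟩, le_antisymm (Nat.sInf_le hd)
    (le_csInf ⟨d, hd⟩ fun d' hd' => Nat.le_of_dvd (pos_of_mem_DeltaOf hd') (hdvd d' hd'))⟩

section

variable {m p : ℕ} {e : Fin m → G}

/-- `e` is the standard basis of a subgroup of `G` isomorphic to `(ℤ/p)^m`. -/
def IsIndependentOfOrder (p : ℕ) (e : Fin m → G) : Prop :=
  ∀ c : Fin m → ℤ, ∑ i, c i • e i = 0 ↔ ∀ i, (p : ℤ) ∣ c i

/-- The sequence `e₀^a (e₁ ⋯ e_m)^(p-a)`, where `e₀ = e₁ + ⋯ + e_m`. -/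
def mixedSeq (p : ℕ) (e : Fin m → G) (a : ℕ) : Multiset G :=
  Multiset.replicate a (∑ i, e i) + (p - a) • univ.val.map e

theorem mixedSeq_one_add_one (hp : 1 < p) :
    mixedSeq p e 1 + mixedSeq p e 1 = mixedSeq p e 2 + p • univ.val.map e := by
  have hp' : (p - 1) + (p - 1) = (p - 2) + p := by omega
  simp only [mixedSeq]
  rw [add_add_add_comm, ← Multiset.replicate_add, ← add_nsmul, hp', add_nsmul, add_assoc]

namespace IsIndependentOfOrder

variable (he : IsIndependentOfOrder p e)
include he

theorem nsmul_eq_zero_iff (i : Fin m) (k : ℕ) : k • e i = 0 ↔ p ∣ k := by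
  classical
  simpa [Pi.single_apply, apply_ite, Int.natCast_dvd_natCast] using he (Pi.single i k)

theorem nsmul_sum : p • ∑ i, e i = 0 := by
  rw [smul_sum]
  exact sum_eq_zero fun i _ => (he.nsmul_eq_zero_iff i p).2 dvd_rfl

theorem injective (hp : p ≠ 1) : Injective e := by
  classical
  intro i j hij
  by_contra hne
  have h := (he (Pi.single i 1 - Pi.single j 1)).1 (by
    simp [sub_smul, sum_sub_distrib, Pi.single_apply, hij]) i
  simp [Ne.symm hne] at h
  exact hp (Nat.dvd_one.mp (by exact_mod_cast h))

theorem sum_ne_apply (hp : p ≠ 1) (hm : 1 < m) (i : Fin m) : ∑ j, e j ≠ e i := by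
  classical
  intro hsum
  have : Nontrivial (Fin m) := Fin.nontrivial_iff_two_le.mpr hm
  obtain ⟨j, hj⟩ := exists_ne i
  have h := (he (1 - Pi.single i 1)).1 (by
    simp [sub_smul, sum_sub_distrib, Pi.single_apply, hsum]) j
  simp [hj] at h
  exact hp (Nat.dvd_one.mp (by exact_mod_cast h))

theorem sum_mixedSeq {a : ℕ} (ha : a ≤ p) : (mixedSeq p e a).sum = 0 := by
  rw [mixedSeq, Multiset.sum_add, Multiset.sum_replicate, Multiset.sum_nsmul, ← sum_eq_multiset_sum,
    ← add_nsmul, Nat.add_sub_cancel' ha, he.nsmul_sum]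

end IsIndependentOfOrder

section

variable [DecidableEq G]

def familyWithSum (e : Fin m → G) : Finset G := insert (∑ i, e i) (univ.image e)

/-- On sequences over `familyWithSum e` this counts `e₀ = ∑ i, e i` with weight `m`
and every `e i` with weight `1`. -/
def weight (e : Fin m → G) (S : Multiset G) : ℕ :=
  Multiset.card S + (m - 1) * S.count (∑ i, e i)

theorem weight_add (S T : Multiset G) : weight e (S + T) = weight e S + weight e T := by
  simp only [weight, Multiset.card_add, Multiset.count_add]
  ring

namespace IsIndependentOfOrder

variable (he : IsIndependentOfOrder p e) (hp : p ≠ 1) (hm : 1 < m)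
include he hp hm

theorem sum_familyWithSum {M : Type*} [AddCommMonoid M] (f : G → M) :
    ∑ g ∈ familyWithSum e, f g = f (∑ i, e i) + ∑ i, f (e i) := by
  rw [familyWithSum, sum_insert, sum_image (he.injective hp).injOn]
  simpa [eq_comm] using he.sum_ne_apply hp hm

variable {S : Multiset G} (hS : ∀ g ∈ S, g ∈ familyWithSum e)
include hS

theorem card_eq_of_subset :
    Multiset.card S = S.count (∑ i, e i) + ∑ i, S.count (e i) := by
  rw [← Multiset.sum_count_eq_card hS, he.sum_familyWithSum hp hm]

theorem sum_eq_of_subset :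
    S.sum = ∑ i, (S.count (∑ j, e j) + S.count (e i)) • e i := by
  rw [sum_multiset_count_of_subset S _ fun g hg => hS g (Multiset.mem_toFinset.mp hg),
    he.sum_familyWithSum hp hm, smul_sum, ← sum_add_distrib]
  simp only [add_smul]

theorem sum_eq_zero_iff_of_subset :
    S.sum = 0 ↔ ∀ i, p ∣ S.count (∑ j, e j) + S.count (e i) := by
  simp_rw [he.sum_eq_of_subset hp hm hS, ← natCast_zsmul, he _, Int.natCast_dvd_natCast]

theorem weight_eq_of_subset :
    weight e S = ∑ i, (S.count (∑ j, e j) + S.count (e i)) := by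
  rw [weight, he.card_eq_of_subset hp hm hS, sum_add_distrib, sum_const, card_univ,
    Fintype.card_fin, smul_eq_mul]
  obtain ⟨k, rfl⟩ := Nat.exists_eq_add_of_lt hm
  simp only [Nat.add_sub_cancel]
  ring

end IsIndependentOfOrder

theorem mem_familyWithSum_of_mem_mixedSeq {a : ℕ} {g : G} (hg : g ∈ mixedSeq p e a) :
    g ∈ familyWithSum e := by
  rcases Multiset.mem_add.1 hg with hg | hg
  · simp [familyWithSum, Multiset.eq_of_mem_replicate hg]
  · obtain ⟨i, -, rfl⟩ := Multiset.mem_map.1 (Multiset.mem_of_mem_nsmul hg)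
    simp [familyWithSum]

namespace IsIndependentOfOrder

variable (he : IsIndependentOfOrder p e)
include he

theorem replicate_isAtom (hp : p ≠ 0) (i : Fin m) :
    IsAtomOver (familyWithSum e : Set G) (Multiset.replicate p (e i)) := by
  refine ⟨⟨fun g hg => ?_, ?_⟩, fun h => hp (by simpa using congrArg Multiset.card h), ?_⟩
  · simp [familyWithSum, Multiset.eq_of_mem_replicate hg]
  · rw [Multiset.sum_replicate, he.nsmul_eq_zero_iff]
  · intro B hB hB0 hBp hsum
    obtain ⟨k, hkp, rfl⟩ := Multiset.le_replicate_iff.1 hB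
    rw [Multiset.sum_replicate, he.nsmul_eq_zero_iff] at hsum
    have hk0 : k ≠ 0 := by rintro rfl; exact hB0 rfl
    exact hBp (congrArg (Multiset.replicate · (e i)) (le_antisymm hkp (Nat.le_of_dvd
      (Nat.pos_of_ne_zero hk0) hsum)))

variable (hp : p ≠ 1) (hm : 1 < m)
include hp hm

theorem count_sum_mixedSeq (a : ℕ) : (mixedSeq p e a).count (∑ i, e i) = a := by
  rw [mixedSeq, Multiset.count_add, Multiset.count_replicate_self, Multiset.count_nsmul,
    Multiset.count_eq_zero.2 (by simpa [eq_comm] using he.sum_ne_apply hp hm), mul_zero, add_zero]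

theorem count_apply_mixedSeq (a : ℕ) (i : Fin m) : (mixedSeq p e a).count (e i) = p - a := by
  rw [mixedSeq, Multiset.count_add, Multiset.count_replicate, if_neg (he.sum_ne_apply hp hm i),
    Multiset.count_nsmul, Multiset.count_map_eq_count' e _ (he.injective hp), Multiset.count_univ,
    zero_add, mul_one]

theorem mixedSeq_isAtom {a : ℕ} (ha : 1 ≤ a) (hap : a ≤ p) :
    IsAtomOver (familyWithSum e : Set G) (mixedSeq p e a) := by
  have hT : ∀ g ∈ mixedSeq p e a, g ∈ familyWithSum e := fun _ =>
    mem_familyWithSum_of_mem_mixedSeq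
  refine ⟨⟨hT, he.sum_mixedSeq hap⟩, fun h0 => ?_, fun B hB hB0 hBT hsum => ?_⟩
  · have := he.count_sum_mixedSeq hp hm a
    rw [h0, Multiset.count_zero] at this
    omega
  have hBS : ∀ g ∈ B, g ∈ familyWithSum e := fun g hg => hT g (Multiset.mem_of_le hB hg)
  have hBa : B.count (∑ i, e i) ≤ a :=
    he.count_sum_mixedSeq hp hm a ▸ Multiset.count_le_of_le _ hB
  have hBi : ∀ i, B.count (e i) ≤ p - a := fun i =>
    he.count_apply_mixedSeq hp hm a i ▸ Multiset.count_le_of_le _ hB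
  have hdvd := (he.sum_eq_zero_iff_of_subset hp hm hBS).1 hsum
  rcases Nat.eq_zero_or_pos (B.count (∑ i, e i)) with hB0' | hBpos
  · refine hB0 (Multiset.card_eq_zero.1 ?_)
    rw [he.card_eq_of_subset hp hm hBS, hB0', zero_add]
    refine sum_eq_zero fun i _ => ?_
    have := hBi i
    exact Nat.eq_zero_of_dvd_of_lt (by simpa [hB0'] using hdvd i) (by omega)
  · have hBp : ∀ i, B.count (∑ j, e j) + B.count (e i) = p := fun i =>
      le_antisymm (by have := hBi i; omega) (Nat.le_of_dvd (by omega) (hdvd i))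
    have hBa' : B.count (∑ i, e i) = a := by
      have := hBp ⟨0, by omega⟩; have := hBi ⟨0, by omega⟩; omega
    refine hBT (Multiset.eq_of_le_of_card_le hB ?_)
    rw [he.card_eq_of_subset hp hm hT, he.card_eq_of_subset hp hm hBS, hBa',
      he.count_sum_mixedSeq hp hm]
    refine Nat.add_le_add_left (sum_le_sum fun i _ => ?_) a
    rw [he.count_apply_mixedSeq hp hm]
    have := hBp i
    omega

end IsIndependentOfOrder

namespace IsIndependentOfOrder

variable (he : IsIndependentOfOrder p e) (hp : 1 < p) (hm : 1 < m)
include he hp hm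

theorem weight_replicate (i : Fin m) : weight e (Multiset.replicate p (e i)) = p := by
  rw [weight, Multiset.card_replicate, Multiset.count_replicate,
    if_neg (he.sum_ne_apply hp.ne' hm i).symm, mul_zero, add_zero]

theorem weight_mixedSeq {a : ℕ} (ha : a ≤ p) : weight e (mixedSeq p e a) = m * p := by
  simp only [he.weight_eq_of_subset hp.ne' hm fun _ => mem_familyWithSum_of_mem_mixedSeq,
    he.count_sum_mixedSeq hp.ne' hm, he.count_apply_mixedSeq hp.ne' hm, Nat.add_sub_cancel' ha,
    sum_const, card_univ, Fintype.card_fin, smul_eq_mul]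

theorem weight_of_isAtom {A : Multiset G} (hA : IsAtomOver (familyWithSum e : Set G) A) :
    weight e A = p ∨ weight e A = m * p := by
  have ⟨⟨hAS, hAsum⟩, hA0, _⟩ := hA
  have hdvd := (he.sum_eq_zero_iff_of_subset hp.ne' hm hAS).1 hAsum
  by_cases hbig : ∃ i, p ≤ A.count (e i)
  · obtain ⟨i, hi⟩ := hbig
    have hEi := he.replicate_isAtom (by omega) i
    rw [← hA.eq_of_le (Multiset.le_count_iff_replicate_le.1 hi) hEi.2.1 hEi.1.2]
    exact Or.inl (he.weight_replicate hp hm i)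
  simp only [not_exists, not_le] at hbig
  right
  by_cases hbig₀ : p ≤ A.count (∑ i, e i)
  · have hE₀ := he.mixedSeq_isAtom hp.ne' hm (by omega) le_rfl
    have hle : mixedSeq p e p ≤ A := by
      simpa [mixedSeq] using Multiset.le_count_iff_replicate_le.1 hbig₀
    rw [← hA.eq_of_le hle hE₀.2.1 hE₀.1.2]
    exact he.weight_mixedSeq hp hm le_rfl
  have hA₀ : 0 < A.count (∑ i, e i) := by
    refine Nat.pos_of_ne_zero fun h => hA0 (Multiset.card_eq_zero.1 ?_)
    rw [he.card_eq_of_subset hp.ne' hm hAS, h, zero_add]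
    refine sum_eq_zero fun i _ => ?_
    have := hbig i
    exact Nat.eq_zero_of_dvd_of_lt (by simpa [h] using hdvd i) (by omega)
  rw [he.weight_eq_of_subset hp.ne' hm hAS, show m * p = ∑ _i : Fin m, p by simp]
  refine sum_congr rfl fun i _ => ?_
  have := hbig i
  exact Nat.eq_of_dvd_of_lt_two_mul (by omega) (hdvd i) (by omega)

theorem weight_modEq_of_mem_lengthSet {B : Multiset G} {k : ℕ}
    (hk : k ∈ lengthSet (familyWithSum e : Set G) B) : weight e B ≡ p * k [MOD p * (m - 1)] := by
  obtain ⟨f, rfl, hf, rfl⟩ := hk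
  induction f using Multiset.induction_on with
  | empty => simpa [weight] using Nat.ModEq.refl 0
  | cons A f ih =>
    have hA : weight e A ≡ p [MOD p * (m - 1)] := by
      rcases he.weight_of_isAtom hp hm (hf A (Multiset.mem_cons_self A f)) with h | h
      · rw [h]
      · rw [h]
        refine ((Nat.modEq_iff_dvd' (Nat.le_mul_of_pos_left p (by omega))).2 ?_).symm
        rw [← Nat.sub_one_mul, mul_comm]
    rw [Multiset.sum_cons, weight_add, Multiset.card_cons, mul_add_one, add_comm (p * _)]
    exact hA.add (ih fun A' hA' => hf A' (Multiset.mem_cons_of_mem hA'))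

theorem dvd_sub_of_mem_lengthSet {B : Multiset G} {k k' : ℕ}
    (hk : k ∈ lengthSet (familyWithSum e : Set G) B)
    (hk' : k' ∈ lengthSet (familyWithSum e : Set G) B) : m - 1 ∣ k' - k := by
  have hpk : p * k ≡ p * k' [MOD p * (m - 1)] :=
    (he.weight_modEq_of_mem_lengthSet hp hm hk).symm.trans
      (he.weight_modEq_of_mem_lengthSet hp hm hk')
  exact Nat.dvd_of_mod_eq_zero
    (Nat.sub_mod_eq_zero_of_mod_eq (Nat.ModEq.mul_left_cancel' (by omega) hpk).symm)

theorem dvd_of_mem_DeltaOf {d : ℕ} (hd : d ∈ DeltaOf (familyWithSum e : Set G)) : m - 1 ∣ d := by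
  simp only [DeltaOf, Set.mem_iUnion] at hd
  obtain ⟨B, -, a, ha, b, hb, -, rfl, -⟩ := hd
  exact he.dvd_sub_of_mem_lengthSet hp hm ha hb

theorem sub_one_mem_DeltaStar : m - 1 ∈ DeltaStar G := by
  set L := lengthSet (familyWithSum e : Set G) (mixedSeq p e 1 + mixedSeq p e 1)
  have hT₁ := he.mixedSeq_isAtom hp.ne' hm le_rfl hp.le
  have h₂ : 2 ∈ L := ⟨{mixedSeq p e 1, mixedSeq p e 1}, rfl, by simp [hT₁], by simp⟩
  have hm₁ : m + 1 ∈ L := by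
    refine ⟨mixedSeq p e 2 ::ₘ (univ.val.map e).map (Multiset.replicate p), by simp,
      fun A hA => ?_, ?_⟩
    · rcases Multiset.mem_cons.1 hA with rfl | hA
      · exact he.mixedSeq_isAtom hp.ne' hm one_le_two hp
      · obtain ⟨_, hg, rfl⟩ := Multiset.mem_map.1 hA
        obtain ⟨i, -, rfl⟩ := Multiset.mem_map.1 hg
        exact he.replicate_isAtom (by omega) i
    · rw [Multiset.sum_cons, mixedSeq_one_add_one hp]
      simp only [← Multiset.nsmul_singleton, Multiset.sum_map_nsmul, Multiset.sum_map_singleton]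
  have hB : mixedSeq p e 1 + mixedSeq p e 1 ≠ 0 := by simpa using hT₁.2.1
  refine mem_DeltaStar_of_forall_dvd _ ?_ fun d hd => he.dvd_of_mem_DeltaOf hp hm hd
  refine Set.mem_iUnion₂.2 ⟨_, hB, 2, h₂, m + 1, hm₁, by omega, by omega, fun c hc h2c hcm => ?_⟩
  have := Nat.le_of_dvd (by omega) (he.dvd_sub_of_mem_lengthSet hp hm h₂ hc)
  omega

end IsIndependentOfOrder

end

theorem ZMod.zsmul_natCast_eq_zero_iff_dvd {n p q : ℕ} (hn : p * q = n) (hq : q ≠ 0) (c : ℤ) :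
    c • (q : ZMod n) = 0 ↔ (p : ℤ) ∣ c := by
  subst hn
  rw [zsmul_eq_mul, ← Int.cast_natCast, ← Int.cast_mul, ZMod.intCast_zmod_eq_zero_iff_dvd,
    Nat.cast_mul]
  exact Int.mul_dvd_mul_iff_right (by exact_mod_cast hq)

theorem Pi.sum_single_eq_zero_iff {ι κ : Type*} [Fintype ι] [DecidableEq κ] {β : κ → Type*}
    [∀ k, AddCommMonoid (β k)] {f : ι → κ} (hf : Injective f) (x : ∀ i, β (f i)) :
    ∑ i, Pi.single (f i) (x i) = 0 ↔ ∀ i, x i = 0 := by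
  refine ⟨fun h i => ?_, fun h => by simp [h]⟩
  have := congrFun h (f i)
  rwa [Finset.sum_apply, sum_eq_single i (fun j _ hji => Pi.single_eq_of_ne (hf.ne hji.symm) _)
    (by simp), Pi.single_eq_same] at this

theorem IsRank.exists_isIndependentOfOrder {r : ℕ} (hr : IsRank G r) (hm : 0 < m)
    (hmr : m ≤ r) : ∃ p, 1 < p ∧ ∃ e : Fin m → G, IsIndependentOfOrder p e := by
  classical
  obtain ⟨n, hn, hdvd, ⟨φ⟩⟩ := hr
  let ι : Fin m → Fin r := Fin.castLE hmr
  let p := n ⟨0, by omega⟩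
  have hpq (i : Fin m) : p * (n (ι i) / p) = n (ι i) :=
    Nat.mul_div_cancel' (hdvd _ _ (Fin.mk_le_of_le_val (Nat.zero_le _)))
  have hq (i : Fin m) : n (ι i) / p ≠ 0 := fun h => by
    have := hpq i
    rw [h, mul_zero] at this
    have := hn (ι i)
    omega
  refine ⟨p, hn _, fun i => φ.symm (Pi.single (ι i) ((n (ι i) / p : ℕ) : ZMod (n (ι i)))),
    fun c => ?_⟩
  simp_rw [← map_zsmul, ← map_sum, map_eq_zero_iff _ φ.symm.injective, ← Pi.single_smul]
  rw [Pi.sum_single_eq_zero_iff (Fin.castLE_injective hmr)]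
  exact forall_congr' fun i => ZMod.zsmul_natCast_eq_zero_iff_dvd (hpq i) (hq i) (c i)

end

theorem Icc_rank_subset_DeltaStar_general
    (G : Type*) [AddCommGroup G] (r : ℕ)
    (hr : IsRank G r) :
    Set.Icc 1 (r - 1) ⊆ DeltaStar G := by
  classical
  rintro d ⟨hd, hdr⟩
  obtain ⟨p, hp, e, he⟩ := hr.exists_isIndependentOfOrder (m := d + 1) (by omega) (by omega)
  simpa using he.sub_one_mem_DeltaStar hp (by omega)

theorem Icc_rank_subset_DeltaStar
    (G : Type*) [AddCommGroup G] [Fintype G] (r : ℕ)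
    (hr : IsRank G r) (hr2 : 2 ≤ r) :
    Set.Icc 1 (r - 1) ⊆ DeltaStar G :=
  Icc_rank_subset_DeltaStar_general G r hr
end

section
/- Let G be a finite abelian group, G₀ ⊆ G a subset, and g ∈ G₀ \ {0} with g ∈ ⟨G₀ \ {g}⟩. Then for each prime p dividing ord(g), there exists an atom A ∈ A(G₀) such that 2 ≤ |supp(A)| ≤ r(G) + 1, 1 ≤ v_g(A) ≤ ord(g)/2, v_g(A) divides ord(g), and p does not divide v_g(A). -/
/- Common definitions for zero-sum theory over a finite abelian group. -/

variable {G : Type*} [AddCommGroup G]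

/-! Let `m` be the part of `ord(g)` prime to `p`; the `p`-element `m • g` lies in `⟨G₀ \ {g}⟩`.
Multiplying by an integer that projects `G` onto its `p`-primary component, `m • g` is generated
by the projections of elements of `G₀ \ {g}`; take an irredundant such set `F`. The images of `F`
in `P / pP` (with `P = ⟨F⟩`) are independent over `𝔽_p`, so
`p ^ |F| ≤ |P / pP| = |P[p]| ≤ |G[p]| ≤ p ^ r`, and the preimages of `F` still generate `m • g`.
The order `d` of `g` modulo the group they generate divides `m`. For a shortest sequence `T` over
these preimages with sum `-d • g`, the sequence `g ^ d T` is an atom: a zero-sum subsequence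
contains `g` with multiplicity in `d ℕ`, hence `0` or `d`, and the shortness of `T` rules out
both proper cases. -/

theorem ZMod.card_nsmul_eq_zero_le {n p : ℕ} (hn : 0 < n) (hp : 0 < p) :
    Nat.card {z : ZMod n // p • z = 0} ≤ p := by
  have : NeZero n := ⟨hn.ne'⟩
  classical
  rw [Nat.card_eq_fintype_card, Fintype.card_subtype]
  exact IsAddCyclic.card_nsmul_eq_zero_le hp

theorem IsRank.card_nsmul_eq_zero_le {r p : ℕ} (hr : IsRank G r) (hp : 0 < p) :
    Nat.card {x : G // p • x = 0} ≤ p ^ r := by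
  obtain ⟨d, hd, -, ⟨e⟩⟩ := hr
  have hsplit : {x : G // p • x = 0} ≃ ∀ i, {z : ZMod (d i) // p • z = 0} :=
    (e.toEquiv.subtypeEquiv fun x => by
      simp only [← e.map_eq_zero_iff, map_nsmul, funext_iff, Pi.smul_apply, Pi.zero_apply]
      rfl).trans Equiv.subtypePiEquivPi
  calc Nat.card {x : G // p • x = 0} = ∏ i, Nat.card {z : ZMod (d i) // p • z = 0} := by
        rw [Nat.card_congr hsplit, Nat.card_pi]
    _ ≤ ∏ _i : Fin r, p :=
        Finset.prod_le_prod' fun i _ => ZMod.card_nsmul_eq_zero_le (by linarith [hd i]) hp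
    _ = p ^ r := by simp

theorem AddMonoidHom.card_quotient_range_eq_card_ker {A : Type*} [AddCommGroup A] [Finite A]
    (f : A →+ A) : Nat.card (A ⧸ f.range) = Nat.card f.ker := by
  have hrange := f.range.card_mul_index
  have hker := f.ker.card_mul_index
  rw [AddSubgroup.index_ker] at hker
  exact Nat.eq_of_mul_eq_mul_left Nat.card_pos (hrange.trans (hker.symm.trans (mul_comm _ _)))

theorem AddSubgroup.mem_of_zsmul_mem_of_isCoprime {H : AddSubgroup G} {x : G} {w n : ℤ}
    (hwn : IsCoprime w n) (hn : n • x = 0) (hw : w • x ∈ H) : x ∈ H := by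
  obtain ⟨u, v, huv⟩ := hwn
  have hx : x = u • (w • x) + v • (n • x) := by
    rw [smul_smul, smul_smul, ← add_smul, huv, one_smul]
  rw [hx, hn, smul_zero, add_zero]
  exact zsmul_mem hw u

theorem mem_closure_diff_of_sum_zsmul_eq_zero {p k : ℕ} (hp : p.Prime) {S : Finset G}
    {w : S → ℤ} (hw : ∑ i, w i • (i : G) = 0) {i₀ : S} (hpw : ¬ (p : ℤ) ∣ w i₀)
    (hi₀ : p ^ k • (i₀ : G) = 0) :
    (i₀ : G) ∈ AddSubgroup.closure ((S : Set G) \ {(i₀ : G)}) := by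
  classical
  have hcop : IsCoprime (w i₀) ((p : ℤ) ^ k) :=
    (((Nat.prime_iff_prime_int.mp hp).coprime_iff_not_dvd.mpr hpw).pow_left).symm
  refine AddSubgroup.mem_of_zsmul_mem_of_isCoprime hcop
    (by rwa [← Int.natCast_pow, natCast_zsmul]) ?_
  rw [← Finset.add_sum_erase _ _ (Finset.mem_univ i₀), add_eq_zero_iff_eq_neg] at hw
  rw [hw]
  refine neg_mem (AddSubgroup.sum_mem _ fun i hi => zsmul_mem (AddSubgroup.subset_closure ?_) _)
  exact ⟨i.2, fun h => (Finset.mem_erase.mp hi).1 (Subtype.ext h)⟩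

theorem Fin.not_dvd_val_sub_val_of_ne {p : ℕ} {a b : Fin p} (hab : a ≠ b) :
    ¬ (p : ℤ) ∣ ((b : ℕ) : ℤ) - (a : ℕ) := by
  intro hdvd
  have hlt : |((b : ℕ) : ℤ) - (a : ℕ)| < p := by
    rw [abs_lt]
    constructor <;> omega
  exact hab (Fin.ext (by have := Int.eq_zero_of_abs_lt_dvd hdvd hlt; omega))

theorem pow_card_le_card_nsmul_eq_zero [Finite G] {p : ℕ} (hp : p.Prime) {S : Finset G}
    (hS : ∀ s ∈ S, s ∉ AddSubgroup.closure ((S : Set G) \ {s}))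
    (hpS : ∀ s ∈ S, ∃ k, p ^ k • s = 0) :
    p ^ S.card ≤ Nat.card {x : G // p • x = 0} := by
  set P := AddSubgroup.closure (S : Set G)
  let μ := nsmulAddMonoidHom (α := P) p
  let ι : S → P := fun s => ⟨s, AddSubgroup.subset_closure s.2⟩
  let θ : (S → Fin p) → P ⧸ μ.range := fun a => ↑(∑ i, (a i : ℕ) • ι i)
  have hθ : Function.Injective θ := by
    intro a b hab
    by_contra hne
    obtain ⟨i₀, hi₀⟩ := Function.ne_iff.mp hne
    obtain ⟨y, hy⟩ := QuotientAddGroup.eq.mp hab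
    obtain ⟨β, hβ⟩ := AddSubgroup.mem_closure_range_iff_of_fintype.mp
      (by simp : (y : G) ∈ AddSubgroup.closure (Set.range ((↑) : S → G)))
    have hyG := congrArg Subtype.val hy
    simp only [μ, nsmulAddMonoidHom_apply, AddSubgroup.coe_nsmul, AddSubgroup.coe_add,
      AddSubgroup.coe_neg, AddSubgroup.val_finsetSum, ι] at hyG
    have hW : ∑ i : S, (((b i : ℕ) : ℤ) - (a i : ℕ) - p * β i) • (i : G) = 0 := by
      simp only [sub_smul, mul_smul, Finset.sum_sub_distrib, ← Finset.smul_sum, natCast_zsmul]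
      rw [← hβ, hyG]
      abel
    have hpW : ¬ (p : ℤ) ∣ ((b i₀ : ℕ) : ℤ) - (a i₀ : ℕ) - p * β i₀ := fun hdvd =>
      Fin.not_dvd_val_sub_val_of_ne hi₀ ((dvd_sub_left (dvd_mul_right (p : ℤ) (β i₀))).mp hdvd)
    obtain ⟨k, hk⟩ := hpS i₀ i₀.2
    exact hS i₀ i₀.2 (mem_closure_diff_of_sum_zsmul_eq_zero hp hW hpW hk)
  calc p ^ S.card = Nat.card (S → Fin p) := by
        rw [Nat.card_fun, Nat.card_fin, Nat.card_eq_finsetCard]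
    _ ≤ Nat.card (P ⧸ μ.range) := Nat.card_le_card_of_injective θ hθ
    _ = Nat.card μ.ker := μ.card_quotient_range_eq_card_ker
    _ ≤ Nat.card {x : G // p • x = 0} := by
      refine Nat.card_le_card_of_injective
        (fun z => ⟨z.1, by simpa [μ] using congrArg Subtype.val (μ.mem_ker.mp z.2)⟩)
        fun z z' h =>
          Subtype.ext (Subtype.ext (congrArg (fun x : {x : G // p • x = 0} => (x : G)) h))

-- `c ≡ 0` modulo the part of `|G|` prime to `p` and `c ≡ 1` modulo its `p`-part.
theorem exists_zsmul_projection_primary [Finite G] {p : ℕ} (hp : p.Prime) :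
    ∃ c : ℤ, ∀ x : G, (∃ k, p ^ k • c • x = 0) ∧ ((∃ k, p ^ k • x = 0) → c • x = x) := by
  obtain ⟨K, m, hpm, hcard⟩ :=
    Nat.exists_eq_pow_mul_and_not_dvd (Nat.card_pos (α := G)).ne' p hp.ne_one
  have hcop : Nat.Coprime (p ^ K) m := (hp.coprime_iff_not_dvd.mpr hpm).pow_left K
  obtain ⟨u, v, huv⟩ := Nat.isCoprime_iff_coprime.mpr hcop.symm
  refine ⟨u * m, fun x => ⟨⟨K, ?_⟩, fun ⟨k, hk⟩ => ?_⟩⟩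
  · rw [← natCast_zsmul, smul_smul, mul_left_comm, ← Nat.cast_mul, ← hcard, mul_smul,
      natCast_zsmul, card_nsmul_eq_zero', smul_zero]
  · have hord : addOrderOf x ∣ p ^ K := by
      refine (Nat.Coprime.coprime_dvd_left (addOrderOf_dvd_of_nsmul_eq_zero hk)
        ((hp.coprime_iff_not_dvd.mpr hpm).pow_left k)).dvd_of_dvd_mul_right ?_
      exact hcard ▸ addOrderOf_dvd_natCard x
    have hK : ((p ^ K : ℕ) : ℤ) • x = 0 := by
      rw [natCast_zsmul]; exact addOrderOf_dvd_iff_nsmul_eq_zero.mp hord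
    rw [show u * m = 1 - v * (p ^ K : ℕ) by linarith, sub_smul, mul_smul, hK,
      smul_zero, sub_zero, one_smul]

theorem IsRank.exists_finset_card_le_of_mem_closure [Finite G] {r p : ℕ} (hr : IsRank G r)
    (hp : p.Prime) {E : Set G} {h : G} (hh : h ∈ AddSubgroup.closure E)
    (hph : ∃ k, p ^ k • h = 0) :
    ∃ F : Finset G, ↑F ⊆ E ∧ F.card ≤ r ∧ h ∈ AddSubgroup.closure (F : Set G) := by
  classical
  obtain ⟨c, hc⟩ := exists_zsmul_projection_primary (G := G) hp
  let π := zsmulAddGroupHom (α := G) c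
  have hπh : h ∈ AddSubgroup.closure (π '' E) := by
    rw [← AddMonoidHom.map_closure]
    exact ⟨h, hh, (hc h).2 hph⟩
  obtain ⟨S, ⟨hSE, hSh⟩, hSmin⟩ := exists_minimal_of_wellFoundedLT
    (fun S : Finset G => ↑S ⊆ π '' E ∧ h ∈ AddSubgroup.closure (S : Set G))
    ⟨(Set.toFinite (π '' E)).toFinset, by simpa using hπh⟩
  have hirred : ∀ s ∈ S, s ∉ AddSubgroup.closure ((S : Set G) \ {s}) := by
    intro s hs hs'
    have hle : AddSubgroup.closure (S : Set G) ≤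
        AddSubgroup.closure ((S.erase s : Finset G) : Set G) := by
      rw [AddSubgroup.closure_le, Finset.coe_erase]
      intro x hx
      by_cases hxs : x = s
      · exact hxs ▸ hs'
      · exact AddSubgroup.subset_closure ⟨hx, hxs⟩
    have hSs := hSmin ⟨(Finset.coe_subset.mpr (S.erase_subset s)).trans hSE, hle hSh⟩
      (S.erase_subset s)
    exact S.notMem_erase s (hSs hs)
  have hpS : ∀ s ∈ S, ∃ k, p ^ k • s = 0 := fun s hs => by
    obtain ⟨e, -, rfl⟩ := hSE hs
    exact (hc e).1
  have hcard : S.card ≤ r := (Nat.pow_le_pow_iff_right hp.one_lt).mp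
    ((pow_card_le_card_nsmul_eq_zero hp hirred hpS).trans (hr.card_nsmul_eq_zero_le hp.pos))
  obtain ⟨F, hFE, hinj, rfl⟩ := Finset.exists_subset_injOn_image_eq_of_surjOn E S hSE
  refine ⟨F, hFE, Finset.card_image_of_injOn hinj ▸ hcard, ?_⟩
  refine (AddSubgroup.closure_le _).mpr (fun x hx => ?_) hSh
  obtain ⟨f, hf, rfl⟩ := Finset.mem_image.mp hx
  exact zsmul_mem (AddSubgroup.subset_closure hf) c

theorem AddSubgroup.nsmul_mem_iff_addOrderOf_mk_dvd {H : AddSubgroup G} {g : G} {e : ℕ} :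
    e • g ∈ H ↔ addOrderOf (g : G ⧸ H) ∣ e := by
  rw [addOrderOf_dvd_iff_nsmul_eq_zero, ← QuotientAddGroup.mk_nsmul, QuotientAddGroup.eq_zero_iff]

def IsShortestSum (S : Set G) (x : G) (T : Multiset G) : Prop :=
  MinimalFor (fun T : Multiset G => (∀ t ∈ T, t ∈ S) ∧ T.sum = x) Multiset.card T

theorem exists_isShortestSum_of_mem_closure [Finite G] {S : Set G} {x : G}
    (hx : x ∈ AddSubgroup.closure S) : ∃ T, IsShortestSum S x T :=
  exists_minimalFor_of_wellFoundedLT _ _ (AddSubmonoid.exists_multiset_of_mem_closure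
    (by rw [← AddSubgroup.closure_toAddSubmonoid_of_finite]; exact hx))

namespace IsShortestSum

variable {S : Set G} {x : G} {T B : Multiset G}

theorem eq_of_le_of_sum_eq (hT : IsShortestSum S x T) (hB : B ≤ T) (hBx : B.sum = x) :
    B = T :=
  Multiset.eq_of_le_of_card_le hB
    (hT.2 ⟨fun t ht => hT.1.1 t (Multiset.mem_of_le hB ht), hBx⟩ (Multiset.card_le_card hB))

theorem eq_zero_of_le_of_sum_eq_zero (hT : IsShortestSum S x T) (hB : B ≤ T)
    (hB0 : B.sum = 0) : B = 0 := by
  obtain ⟨C, rfl⟩ := Multiset.le_iff_exists_add.mp hB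
  have hC := hT.eq_of_le_of_sum_eq (Multiset.le_add_left C B)
    (by rw [← hT.1.2, Multiset.sum_add, hB0, zero_add])
  exact add_eq_right.mp hC.symm

end IsShortestSum

theorem isAtomOver_replicate_add [Finite G] {G₀ S : Set G} {g : G} {T : Multiset G}
    (hg : g ∈ G₀) (hSG₀ : S ⊆ G₀) (hgS : g ∉ S)
    (hT : IsShortestSum S (-(addOrderOf (g : G ⧸ AddSubgroup.closure S) • g)) T) :
    IsAtomOver G₀ (Multiset.replicate (addOrderOf (g : G ⧸ AddSubgroup.closure S)) g + T) := by
  classical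
  set d := addOrderOf (g : G ⧸ AddSubgroup.closure S)
  have hgT : g ∉ T := fun h => hgS (hT.1.1 g h)
  have hd : d ≠ 0 := (addOrderOf_pos _).ne'
  refine ⟨⟨fun x hx => ?_, ?_⟩, ?_, fun B hBA hB0 hBne hBsum => ?_⟩
  · rcases Multiset.mem_add.mp hx with hx | hx
    · exact Multiset.eq_of_mem_replicate hx ▸ hg
    · exact hSG₀ (hT.1.1 x hx)
  · rw [Multiset.sum_add, Multiset.sum_replicate, hT.1.2, add_neg_cancel]
  · intro h0
    have hgA : g ∈ Multiset.replicate d g + T :=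
      Multiset.mem_add.mpr (Or.inl (Multiset.mem_replicate.mpr ⟨hd, rfl⟩))
    exact Multiset.notMem_zero g (h0 ▸ hgA)
  set e := Multiset.count g B
  set B' := B.filter (· ≠ g)
  have hsplit : Multiset.replicate e g + B' = B := by
    rw [← Multiset.filter_eq' B g]
    exact Multiset.filter_add_not _ B
  have hB'T : B' ≤ T := by
    refine (Multiset.filter_le_filter _ hBA).trans_eq ?_
    rw [Multiset.filter_add, Multiset.filter_eq_nil.mpr, zero_add, Multiset.filter_eq_self]
    · exact fun t ht htg => hgT (htg ▸ ht)
    · exact fun t ht => by simp [Multiset.eq_of_mem_replicate ht]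
  have hed : e ≤ d := by
    simpa [Multiset.count_eq_zero.mpr hgT] using Multiset.count_le_of_le g hBA
  have hsum : e • g + B'.sum = 0 := by
    rw [← hsplit, Multiset.sum_add, Multiset.sum_replicate] at hBsum
    exact hBsum
  have hde : d ∣ e := by
    rw [← AddSubgroup.nsmul_mem_iff_addOrderOf_mk_dvd, eq_neg_of_add_eq_zero_left hsum]
    exact neg_mem (AddSubgroup.multiset_sum_mem _ _ fun t ht =>
      AddSubgroup.subset_closure (hT.1.1 t (Multiset.mem_of_le hB'T ht)))
  rcases Nat.eq_zero_or_pos e with he | he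
  · rw [he, Multiset.replicate_zero, zero_add] at hsplit
    exact hB0 (hsplit ▸ hT.eq_zero_of_le_of_sum_eq_zero hB'T (hsplit ▸ hBsum))
  · have he : e = d := le_antisymm hed (Nat.le_of_dvd he hde)
    rw [he] at hsum hsplit
    refine hBne ?_
    rw [← hsplit, hT.eq_of_le_of_sum_eq hB'T (eq_neg_of_add_eq_zero_right hsum)]

theorem Multiset.card_toFinset_replicate_add {α : Type*} [DecidableEq α] {d : ℕ} (hd : d ≠ 0)
    {g : α} {T : Multiset α} (hgT : g ∉ T) :
    (Multiset.replicate d g + T).toFinset.card = T.toFinset.card + 1 := by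
  rw [Multiset.toFinset_add, Multiset.toFinset_replicate, if_neg hd, Finset.singleton_union,
    Finset.card_insert_of_notMem (by simpa using hgT)]

theorem exists_isAtomOver_count_eq_addOrderOf_mk [Finite G] [DecidableEq G] {G₀ : Set G}
    {F : Finset G} {g : G} (hg : g ∈ G₀) (hFG₀ : ↑F ⊆ G₀) (hgF : g ∉ F)
    (hdg : addOrderOf (g : G ⧸ AddSubgroup.closure (F : Set G)) • g ≠ 0) :
    ∃ A : Multiset G, IsAtomOver G₀ A ∧ 2 ≤ A.toFinset.card ∧ A.toFinset.card ≤ F.card + 1 ∧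
      A.count g = addOrderOf (g : G ⧸ AddSubgroup.closure (F : Set G)) := by
  set d := addOrderOf (g : G ⧸ AddSubgroup.closure (F : Set G))
  obtain ⟨T, hT⟩ := exists_isShortestSum_of_mem_closure
    (neg_mem (AddSubgroup.nsmul_mem_iff_addOrderOf_mk_dvd.mpr (dvd_refl d)))
  have hgT : g ∉ T := fun h => hgF (hT.1.1 g h)
  have hT0 : T ≠ 0 := by
    rintro rfl
    exact hdg (by simpa [eq_comm] using hT.1.2)
  refine ⟨_, isAtomOver_replicate_add hg hFG₀ hgF hT, ?_⟩
  rw [Multiset.card_toFinset_replicate_add (addOrderOf_pos _).ne' hgT]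
  have hTF : T.toFinset.card ≤ F.card :=
    Finset.card_le_card fun t ht => hT.1.1 t (Multiset.mem_toFinset.mp ht)
  have hT1 : 0 < T.toFinset.card := Finset.card_pos.mpr (Multiset.toFinset_nonempty.mpr hT0)
  exact ⟨by omega, by omega, by simp [d, Multiset.count_eq_zero.mpr hgT]⟩

theorem Nat.exists_eq_pow_mul_and_not_dvd_and_two_mul_le {n p : ℕ} (hn : n ≠ 0) (hp : p.Prime)
    (hpn : p ∣ n) : ∃ k m, n = p ^ k * m ∧ ¬ p ∣ m ∧ 0 < m ∧ 2 * m ≤ n := by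
  obtain ⟨k, m, hpm, rfl⟩ := Nat.exists_eq_pow_mul_and_not_dvd hn p hp.ne_one
  have hk : k ≠ 0 := by
    rintro rfl
    exact hpm (by simpa using hpn)
  refine ⟨k, m, rfl, hpm, Nat.pos_of_ne_zero (right_ne_zero_of_mul hn), ?_⟩
  exact Nat.mul_le_mul_right m (hp.two_le.trans (Nat.le_self_pow hk p))

theorem exists_atom_coprime_multiplicity_general
    (G : Type*) [AddCommGroup G] [Fintype G] [DecidableEq G] (r : ℕ)
    (hr : IsRank G r) (G₀ : Set G) (g : G)
    (hg : g ∈ G₀)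
    (hgen : g ∈ AddSubgroup.closure (G₀ \ {g}))
    (p : ℕ) (hp : p.Prime) (hpord : p ∣ addOrderOf g) :
    ∃ A : Multiset G, IsAtomOver G₀ A ∧
      2 ≤ A.toFinset.card ∧ A.toFinset.card ≤ r + 1 ∧
      1 ≤ Multiset.count g A ∧ Multiset.count g A ≤ addOrderOf g / 2 ∧
      Multiset.count g A ∣ addOrderOf g ∧ ¬ p ∣ Multiset.count g A := by
  obtain ⟨k, m, hn, hpm, hm0, hmn⟩ :=
    Nat.exists_eq_pow_mul_and_not_dvd_and_two_mul_le (addOrderOf_pos g).ne' hp hpord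
  obtain ⟨F, hFE, hFr, hmF⟩ := hr.exists_finset_card_le_of_mem_closure hp (nsmul_mem hgen m)
    ⟨k, by rw [smul_smul, ← hn, addOrderOf_nsmul_eq_zero]⟩
  set d := addOrderOf (g : G ⧸ AddSubgroup.closure (F : Set G))
  have hdm : d ∣ m := AddSubgroup.nsmul_mem_iff_addOrderOf_mk_dvd.mp hmF
  have hdm' : d ≤ m := Nat.le_of_dvd hm0 hdm
  have hdg : d • g ≠ 0 := fun h => by
    have := Nat.le_of_dvd (addOrderOf_pos _) (addOrderOf_dvd_of_nsmul_eq_zero h)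
    omega
  obtain ⟨A, hA, hA2, hAF, hAg⟩ :=
    exists_isAtomOver_count_eq_addOrderOf_mk hg (fun x hx => (hFE hx).1) (fun h => (hFE h).2 rfl)
      hdg
  refine ⟨A, hA, hA2, by omega, ?_⟩
  rw [hAg]
  exact ⟨addOrderOf_pos _, (Nat.le_div_iff_mul_le two_pos).mpr (by omega),
    hdm.trans (Dvd.intro_left _ hn.symm), fun h => hpm (h.trans hdm)⟩

theorem exists_atom_coprime_multiplicity
    (G : Type*) [AddCommGroup G] [Fintype G] [DecidableEq G] (r : ℕ)
    (hr : IsRank G r) (G₀ : Set G) (g : G)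
    (hg : g ∈ G₀) (hg0 : g ≠ 0)
    (hgen : g ∈ AddSubgroup.closure (G₀ \ {g}))
    (p : ℕ) (hp : p.Prime) (hpord : p ∣ addOrderOf g) :
    ∃ A : Multiset G, IsAtomOver G₀ A ∧
      2 ≤ A.toFinset.card ∧ A.toFinset.card ≤ r + 1 ∧
      1 ≤ Multiset.count g A ∧ Multiset.count g A ≤ addOrderOf g / 2 ∧
      Multiset.count g A ∣ addOrderOf g ∧ ¬ p ∣ Multiset.count g A :=
  exists_atom_coprime_multiplicity_general G r hr G₀ g hg hgen p hp hpord
end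

section
/- Let G be a finite abelian group and G₀ ⊆ G a non-half-factorial subset satisfying the two conditions: (a) there is some g ∈ G₀ such that Δ(G₀ \ {g}) = ∅, and (b) there is some atom U ∈ A(G₀) with cross number k(U) = 1 and gcd(v_g(U), ord(g)) = 1. Then every atom A ∈ A(G₀) has cross number k(A) ∈ ℕ (a positive integer), and min Δ(G₀) divides k(A) − 1 for every atom A ∈ A(G₀). -/
/- Common definitions for zero-sum theory over a finite abelian group. -/

variable {G : Type*} [AddCommGroup G]

/-!
Over a half-factorial set every atom `W` has cross number `1` (Skula–Zaks): `|G| • W` factors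
both into `|G|` copies of `W` and into `|G| · k(W)` atoms of the form `h^{ord h}`.

For an atom `A`, choose `t` with `ord g ∣ v_g(A) + t · v_g(U)`, possible because `v_g(U)` is a
unit modulo `ord g`. Then `C = A · U^t` splits as `g^{q · ord g} · D` with `D` a zero-sum sequence
over `G₀ \ {g}`, so `C` has a factorization of length `k(C) = k(A) + t` besides `A · U^t` of
length `1 + t`. Hence `k(A) ∈ ℕ`, and `k(A) - 1` is a difference of two lengths of `C`. Such a
difference is a sum of distances, and `δ = min Δ(G₀)` divides every distance `d`: if `δ` and
`d = q δ + r` are distances of `L(B₁)` and `L(B₂)`, then `L(B₁^q · B₂)` contains two lengths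
`r` apart, so `r = 0` or `r ≥ δ`.
-/

lemma exists_sub_mem_distSet {L : Set ℕ} {a b : ℕ} (ha : a ∈ L) (hb : b ∈ L) (hab : a < b) :
    ∃ c ∈ L, a ≤ c ∧ c < b ∧ b - c ∈ distSet L := by
  set S := {c | c ∈ L ∧ c < b}
  have hSb : BddAbove S := ⟨b, fun c hc => hc.2.le⟩
  obtain ⟨hcL, hcb⟩ : sSup S ∈ S := Nat.sSup_mem ⟨a, ha, hab⟩ hSb
  refine ⟨sSup S, hcL, le_csSup hSb ⟨ha, hab⟩, hcb, sSup S, hcL, b, hb, hcb, rfl, ?_⟩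
  exact fun x hx hcx hxb => (le_csSup hSb ⟨hx, hxb⟩).not_gt hcx

lemma dvd_sub_of_forall_mem_distSet_dvd {L : Set ℕ} {d : ℕ} (h : ∀ e ∈ distSet L, d ∣ e)
    {a b : ℕ} (ha : a ∈ L) (hb : b ∈ L) (hab : a ≤ b) : d ∣ b - a := by
  induction b using Nat.strong_induction_on with
  | _ b IH =>
    rcases hab.eq_or_lt with rfl | hlt
    · simp
    obtain ⟨c, hc, hac, hcb, hbc⟩ := exists_sub_mem_distSet ha hb hlt
    rw [show b - a = (b - c) + (c - a) by omega]
    exact dvd_add (h _ hbc) (IH c hcb hc hac)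

section Lengths

variable {G₀ : Set G}

lemma IsAtomOver.mono {G₁ : Set G} (h : G₀ ⊆ G₁) {A : Multiset G} (hA : IsAtomOver G₀ A) :
    IsAtomOver G₁ A :=
  ⟨⟨fun g hg => h (hA.1.1 g hg), hA.1.2⟩, hA.2⟩

lemma lengthSet_mono {G₁ : Set G} (h : G₀ ⊆ G₁) (B : Multiset G) :
    lengthSet G₀ B ⊆ lengthSet G₁ B :=
  fun _ ⟨f, hcard, hf, hsum⟩ => ⟨f, hcard, fun A hA => (hf A hA).mono h, hsum⟩

lemma one_mem_lengthSet {A : Multiset G} (hA : IsAtomOver G₀ A) : 1 ∈ lengthSet G₀ A :=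
  ⟨{A}, rfl, by simpa using hA, Multiset.sum_singleton A⟩

lemma isZeroSumSeq_of_mem_lengthSet {B : Multiset G} {k : ℕ} (hk : k ∈ lengthSet G₀ B) :
    IsZeroSumSeq G₀ B := by
  obtain ⟨f, -, hf, rfl⟩ := hk
  refine ⟨fun g hg => ?_, ?_⟩
  · obtain ⟨A, hA, hgA⟩ := Multiset.mem_join.1 hg
    exact (hf A hA).1.1 g hgA
  · change f.join.sum = 0
    rw [Multiset.sum_join, Multiset.sum_eq_zero fun x hx => ?_]
    obtain ⟨A, hA, rfl⟩ := Multiset.mem_map.1 hx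
    exact (hf A hA).1.2

lemma zero_mem_lengthSet_zero : 0 ∈ lengthSet G₀ 0 :=
  ⟨0, rfl, by simp, rfl⟩

lemma add_mem_lengthSet_add {B₁ B₂ : Multiset G} {k₁ k₂ : ℕ}
    (h₁ : k₁ ∈ lengthSet G₀ B₁) (h₂ : k₂ ∈ lengthSet G₀ B₂) :
    k₁ + k₂ ∈ lengthSet G₀ (B₁ + B₂) := by
  obtain ⟨f₁, rfl, hf₁, rfl⟩ := h₁
  obtain ⟨f₂, rfl, hf₂, rfl⟩ := h₂
  refine ⟨f₁ + f₂, Multiset.card_add _ _, fun A hA => ?_, Multiset.sum_add _ _⟩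
  rcases Multiset.mem_add.1 hA with hA | hA
  exacts [hf₁ A hA, hf₂ A hA]

lemma sum_map_mem_lengthSet_sum_map {ι : Type*} {s : Multiset ι} {F : ι → Multiset G}
    {k : ι → ℕ} (h : ∀ i ∈ s, k i ∈ lengthSet G₀ (F i)) :
    (s.map k).sum ∈ lengthSet G₀ (s.map F).sum := by
  induction s using Multiset.induction_on with
  | empty => exact zero_mem_lengthSet_zero
  | cons i s ih =>
    simp only [Multiset.map_cons, Multiset.sum_cons]
    exact add_mem_lengthSet_add (h i (Multiset.mem_cons_self i s))
      (ih fun j hj => h j (Multiset.mem_cons_of_mem hj))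

lemma mul_mem_lengthSet_nsmul {B : Multiset G} {k : ℕ} (n : ℕ) (h : k ∈ lengthSet G₀ B) :
    n * k ∈ lengthSet G₀ (n • B) := by
  simpa using sum_map_mem_lengthSet_sum_map (s := Multiset.replicate n ()) (fun _ _ => h)

lemma isAtomOver_replicate_addOrderOf [Finite G] {g : G} (hg : g ∈ G₀) :
    IsAtomOver G₀ (Multiset.replicate (addOrderOf g) g) := by
  refine ⟨⟨fun x hx => Multiset.eq_of_mem_replicate hx ▸ hg, ?_⟩, ?_, ?_⟩
  · rw [Multiset.sum_replicate, addOrderOf_nsmul_eq_zero]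
  · exact fun h => (addOrderOf_pos g).ne' (by simpa using congrArg Multiset.card h)
  · intro B hBle hB0 hBne hBsum
    obtain ⟨m, hm, rfl⟩ := Multiset.le_replicate_iff.1 hBle
    rw [Multiset.sum_replicate] at hBsum
    have hm0 : m ≠ 0 := by rintro rfl; exact hB0 (Multiset.replicate_zero g)
    have hmlt : m < addOrderOf g := hm.lt_of_ne (by rintro rfl; exact hBne rfl)
    exact (Nat.le_of_dvd (Nat.pos_of_ne_zero hm0) (addOrderOf_dvd_of_nsmul_eq_zero hBsum)).not_gt
      hmlt

lemma div_addOrderOf_mem_lengthSet_replicate [Finite G] {g : G} (hg : g ∈ G₀) {n : ℕ}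
    (hn : addOrderOf g ∣ n) : n / addOrderOf g ∈ lengthSet G₀ (Multiset.replicate n g) := by
  obtain ⟨q, rfl⟩ := hn
  rw [Nat.mul_div_cancel_left q (addOrderOf_pos g)]
  simpa [Multiset.nsmul_replicate, mul_comm] using
    mul_mem_lengthSet_nsmul q (one_mem_lengthSet (isAtomOver_replicate_addOrderOf hg))

lemma lengthSet_nonempty {D : Multiset G} (hD : IsZeroSumSeq G₀ D) :
    (lengthSet G₀ D).Nonempty := by
  classical
  induction D using Multiset.strongInductionOn with
  | ih D IH =>
    by_cases hatom : IsAtomOver G₀ D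
    · exact ⟨1, one_mem_lengthSet hatom⟩
    by_cases hD0 : D = 0
    · exact ⟨0, hD0 ▸ zero_mem_lengthSet_zero⟩
    obtain ⟨B, hBD, hB0, hBD', hBsum⟩ : ∃ B ≤ D, B ≠ 0 ∧ B ≠ D ∧ B.sum = 0 := by
      simpa [IsAtomOver, hD, hD0] using hatom
    have hsplit : B + (D - B) = D := add_tsub_cancel_of_le hBD
    have hB : IsZeroSumSeq G₀ B := ⟨fun x hx => hD.1 x (Multiset.mem_of_le hBD hx), hBsum⟩
    have hDB : IsZeroSumSeq G₀ (D - B) := by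
      refine ⟨fun x hx => hD.1 x (Multiset.mem_of_le (Multiset.sub_le_self D B) hx), ?_⟩
      have := congrArg Multiset.sum hsplit
      rwa [Multiset.sum_add, hBsum, zero_add, hD.2] at this
    obtain ⟨k₁, hk₁⟩ := IH B (hBD.lt_of_ne hBD') hB
    obtain ⟨k₂, hk₂⟩ := IH (D - B) ((Multiset.sub_le_self D B).lt_of_ne
      fun h => hB0 (by simpa [h] using hsplit)) hDB
    exact ⟨k₁ + k₂, hsplit ▸ add_mem_lengthSet_add hk₁ hk₂⟩

lemma mem_DeltaOf_iff {d : ℕ} :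
    d ∈ DeltaOf G₀ ↔ ∃ B : Multiset G, B ≠ 0 ∧ d ∈ distSet (lengthSet G₀ B) :=
  Set.mem_iUnion₂.trans (by simp only [exists_prop])

lemma exists_mem_DeltaOf_le_sub {B : Multiset G} (hB : B ≠ 0) {a b : ℕ}
    (ha : a ∈ lengthSet G₀ B) (hb : b ∈ lengthSet G₀ B) (hab : a < b) :
    ∃ d ∈ DeltaOf G₀, d ≤ b - a := by
  obtain ⟨c, -, hac, -, hc⟩ := exists_sub_mem_distSet ha hb hab
  exact ⟨b - c, mem_DeltaOf_iff.2 ⟨B, hB, hc⟩, by omega⟩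

lemma lengthSet_subsingleton_of_DeltaOf_eq_empty (hΔ : DeltaOf G₀ = ∅) {B : Multiset G}
    (hB : B ≠ 0) : (lengthSet G₀ B).Subsingleton := by
  intro a ha b hb
  by_contra hne
  obtain ⟨d, hd, -⟩ | ⟨d, hd, -⟩ := (lt_or_gt_of_ne hne).imp
    (exists_mem_DeltaOf_le_sub hB ha hb) (exists_mem_DeltaOf_le_sub hB hb ha)
  all_goals exact Set.notMem_empty d (hΔ ▸ hd)

lemma sInf_DeltaOf_dvd {d : ℕ} (hd : d ∈ DeltaOf G₀) : sInf (DeltaOf G₀) ∣ d := by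
  set δ := sInf (DeltaOf G₀)
  obtain ⟨B₁, -, a₁, ha₁, b₁, hb₁, hab₁, hδ, -⟩ := mem_DeltaOf_iff.1 (Nat.sInf_mem ⟨d, hd⟩)
  obtain ⟨B₂, hB₂, a₂, ha₂, b₂, hb₂, hab₂, rfl, -⟩ := mem_DeltaOf_iff.1 hd
  by_contra hndvd
  have hr : 0 < (b₂ - a₂) % δ := Nat.pos_of_ne_zero (mt Nat.dvd_of_mod_eq_zero hndvd)
  set q := (b₂ - a₂) / δ
  have hq : q * δ + (b₂ - a₂) % δ = b₂ - a₂ := Nat.div_add_mod' _ _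
  have hqb₁ : q * b₁ = q * a₁ + q * δ := by rw [← mul_add]; congr 1; omega
  have hB : q • B₁ + B₂ ≠ 0 := by simp [hB₂]
  obtain ⟨e, he, hle⟩ := exists_mem_DeltaOf_le_sub hB
    (add_mem_lengthSet_add (mul_mem_lengthSet_nsmul q hb₁) ha₂)
    (add_mem_lengthSet_add (mul_mem_lengthSet_nsmul q ha₁) hb₂) (by omega)
  have hδe : δ ≤ e := Nat.sInf_le he
  have hδr : δ ≤ (b₂ - a₂) % δ := by omega
  exact hδr.not_gt (Nat.mod_lt _ (by omega))

lemma sInf_DeltaOf_dvd_sub {B : Multiset G} (hB : B ≠ 0) {a b : ℕ}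
    (ha : a ∈ lengthSet G₀ B) (hb : b ∈ lengthSet G₀ B) (hab : a ≤ b) :
    sInf (DeltaOf G₀) ∣ b - a :=
  dvd_sub_of_forall_mem_distSet_dvd (fun _ he => sInf_DeltaOf_dvd (mem_DeltaOf_iff.2 ⟨B, hB, he⟩))
    ha hb hab

end Lengths

lemma Multiset.nsmul_eq_sum_map_replicate {α : Type*} (n : ℕ) (S : Multiset α) :
    n • S = (S.map fun a => Multiset.replicate n a).sum := by
  conv_lhs => rw [← Multiset.sum_map_singleton S]
  rw [Multiset.smul_sum, Multiset.map_map]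
  simp only [Function.comp_def, Multiset.nsmul_singleton]

lemma crossNumber_add (S T : Multiset G) :
    crossNumber (S + T) = crossNumber S + crossNumber T := by
  simp [crossNumber]

lemma crossNumber_nsmul (n : ℕ) (S : Multiset G) : crossNumber (n • S) = n * crossNumber S := by
  simp [crossNumber, Multiset.map_nsmul, Multiset.sum_nsmul]

lemma crossNumber_sum (f : Multiset (Multiset G)) :
    crossNumber f.sum = (f.map crossNumber).sum := by
  induction f using Multiset.induction_on with
  | empty => simp [crossNumber]
  | cons S f ih => simp [crossNumber_add, ih]

lemma crossNumber_replicate_of_dvd {n : ℕ} {g : G} (hn : addOrderOf g ∣ n) :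
    crossNumber (Multiset.replicate n g) = (n / addOrderOf g : ℕ) := by
  rcases eq_or_ne (addOrderOf g) 0 with h0 | h0
  · simp [crossNumber, h0]
  rw [Nat.cast_div hn (Nat.cast_ne_zero.2 h0)]
  simp [crossNumber, div_eq_mul_inv]

lemma crossNumber_pos [Finite G] {S : Multiset G} (hS : S ≠ 0) : 0 < crossNumber S := by
  obtain ⟨g, hg⟩ := Multiset.exists_mem_of_ne_zero hS
  obtain ⟨S, rfl⟩ := Multiset.exists_cons_of_mem hg
  have hinv : 0 < ((addOrderOf g : ℚ))⁻¹ := by have := addOrderOf_pos g; positivity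
  have hrest : 0 ≤ crossNumber S := Multiset.sum_nonneg fun x hx => by
    obtain ⟨h, -, rfl⟩ := Multiset.mem_map.1 hx
    positivity
  rw [← Multiset.singleton_add, crossNumber_add]
  simpa [crossNumber] using add_pos_of_pos_of_nonneg hinv hrest

lemma crossNumber_eq_of_mem_lengthSet {G₀ : Set G}
    (hG₀ : ∀ A, IsAtomOver G₀ A → crossNumber A = 1) {B : Multiset G} {k : ℕ}
    (hk : k ∈ lengthSet G₀ B) : crossNumber B = k := by
  obtain ⟨f, rfl, hf, rfl⟩ := hk
  rw [crossNumber_sum, Multiset.map_congr rfl fun A hA => hG₀ A (hf A hA)]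
  simp

lemma crossNumber_eq_one_of_DeltaOf_eq_empty [Fintype G] {G₀ : Set G} (hΔ : DeltaOf G₀ = ∅)
    {W : Multiset G} (hW : IsAtomOver G₀ W) : crossNumber W = 1 := by
  set N := Fintype.card G
  have hNW : N • W ≠ 0 := by simp [N, hW.2.1]
  have h₁ : N ∈ lengthSet G₀ (N • W) := by
    simpa using mul_mem_lengthSet_nsmul N (one_mem_lengthSet hW)
  have h₂ : (W.map fun h => N / addOrderOf h).sum ∈ lengthSet G₀ (N • W) := by
    rw [Multiset.nsmul_eq_sum_map_replicate]
    exact sum_map_mem_lengthSet_sum_map fun h hh =>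
      div_addOrderOf_mem_lengthSet_replicate (hW.1.1 h hh) addOrderOf_dvd_card
  have hcross : crossNumber (N • W) = (W.map fun h => N / addOrderOf h).sum := by
    rw [Multiset.nsmul_eq_sum_map_replicate, crossNumber_sum, Multiset.map_map,
      Nat.cast_multiset_sum, Multiset.map_map]
    exact congrArg _
      (Multiset.map_congr rfl fun h _ => crossNumber_replicate_of_dvd addOrderOf_dvd_card)
  rw [← lengthSet_subsingleton_of_DeltaOf_eq_empty hΔ hNW h₁ h₂, crossNumber_nsmul] at hcross
  have hN : (N : ℚ) ≠ 0 := Nat.cast_ne_zero.2 Fintype.card_ne_zero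
  exact mul_left_cancel₀ hN (hcross.trans (mul_one _).symm)

lemma exists_dvd_add_mul_of_coprime (a : ℕ) {u n : ℕ} [NeZero n] (h : u.Coprime n) :
    ∃ t, n ∣ a + t * u := by
  refine ⟨(-(a : ZMod n) * (u : ZMod n)⁻¹).val, ?_⟩
  rw [← ZMod.natCast_eq_zero_iff]
  push_cast
  rw [ZMod.natCast_zmod_val, mul_assoc, mul_comm _ (u : ZMod n), ZMod.coe_mul_inv_eq_one u h]
  ring

lemma isZeroSumSeq_filter_ne [DecidableEq G] {G₀ : Set G} {C : Multiset G}
    (hC : IsZeroSumSeq G₀ C) {g : G} (hg : addOrderOf g ∣ C.count g) :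
    IsZeroSumSeq (G₀ \ {g}) (C.filter (· ≠ g)) := by
  refine ⟨fun x hx => ?_, ?_⟩
  · obtain ⟨hxC, hxg⟩ := Multiset.mem_filter.1 hx
    exact ⟨hC.1 x hxC, hxg⟩
  · have hsplit := congrArg Multiset.sum (Multiset.filter_add_not (· = g) C)
    rwa [Multiset.filter_eq', Multiset.sum_add, Multiset.sum_replicate,
      addOrderOf_dvd_iff_nsmul_eq_zero.1 hg, zero_add, hC.2] at hsplit

lemma exists_crossNumber_mem_lengthSet [Fintype G] [DecidableEq G] {G₀ : Set G} {g : G}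
    (hg : g ∈ G₀) (hΔ : DeltaOf (G₀ \ {g}) = ∅) {C : Multiset G} (hC : IsZeroSumSeq G₀ C)
    (hCg : addOrderOf g ∣ C.count g) : ∃ m ∈ lengthSet G₀ C, crossNumber C = m := by
  set D := C.filter (· ≠ g)
  obtain ⟨ℓ, hℓ⟩ := lengthSet_nonempty (isZeroSumSeq_filter_ne hC hCg)
  have hsplit : Multiset.replicate (C.count g) g + D = C := by
    rw [← Multiset.filter_eq']
    exact Multiset.filter_add_not _ C
  have hlen := add_mem_lengthSet_add (div_addOrderOf_mem_lengthSet_replicate hg hCg)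
    (lengthSet_mono Set.sdiff_subset D hℓ)
  rw [hsplit] at hlen
  refine ⟨_, hlen, ?_⟩
  conv_lhs => rw [← hsplit]
  rw [crossNumber_add, crossNumber_replicate_of_dvd hCg,
    crossNumber_eq_of_mem_lengthSet (fun _ => crossNumber_eq_one_of_DeltaOf_eq_empty hΔ) hℓ]
  exact (Nat.cast_add _ _).symm

theorem cross_numbers_integral_and_minDelta_divides_general
    (G : Type*) [AddCommGroup G] [Fintype G] [DecidableEq G]
    (G₀ : Set G)
    (hcond : ∃ g ∈ G₀, DeltaOf (G₀ \ {g}) = ∅ ∧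
      ∃ U : Multiset G, IsAtomOver G₀ U ∧ crossNumber U = 1 ∧
        Nat.gcd (Multiset.count g U) (addOrderOf g) = 1) :
    ∀ A : Multiset G, IsAtomOver G₀ A →
      ∃ m : ℕ, 0 < m ∧ crossNumber A = (m : ℚ) ∧ sInf (DeltaOf G₀) ∣ m - 1 := by
  obtain ⟨g, hg, hΔ, U, hU, hkU, hgcd⟩ := hcond
  intro A hA
  have : NeZero (addOrderOf g) := ⟨(addOrderOf_pos g).ne'⟩
  obtain ⟨t, ht⟩ := exists_dvd_add_mul_of_coprime (A.count g) hgcd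
  set C := A + t • U
  have hAU : 1 + t ∈ lengthSet G₀ C := by
    simpa using add_mem_lengthSet_add (one_mem_lengthSet hA)
      (mul_mem_lengthSet_nsmul t (one_mem_lengthSet hU))
  have hC : IsZeroSumSeq G₀ C := isZeroSumSeq_of_mem_lengthSet hAU
  have hCg : addOrderOf g ∣ C.count g := by simpa [C, mul_comm] using ht
  obtain ⟨m, hm, hkC⟩ := exists_crossNumber_mem_lengthSet hg hΔ hC hCg
  have hkA : crossNumber A + t = m := by
    rw [← hkC, crossNumber_add, crossNumber_nsmul, hkU, mul_one]
  have htm : t < m := by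
    have := crossNumber_pos hA.2.1
    exact_mod_cast (by linarith : (t : ℚ) < m)
  refine ⟨m - t, by omega, by rw [Nat.cast_sub htm.le]; linarith, ?_⟩
  have hC0 : C ≠ 0 := fun h => hA.2.1 (Multiset.le_zero.1 (h ▸ Multiset.le_add_right A _))
  rw [show m - t - 1 = m - (1 + t) by omega]
  exact sInf_DeltaOf_dvd_sub hC0 hAU hm (by omega)

theorem cross_numbers_integral_and_minDelta_divides
    (G : Type*) [AddCommGroup G] [Fintype G] [DecidableEq G]
    (G₀ : Set G)
    (hnhf : (DeltaOf G₀).Nonempty)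
    (hcond : ∃ g ∈ G₀, DeltaOf (G₀ \ {g}) = ∅ ∧
      ∃ U : Multiset G, IsAtomOver G₀ U ∧ crossNumber U = 1 ∧
        Nat.gcd (Multiset.count g U) (addOrderOf g) = 1) :
    ∀ A : Multiset G, IsAtomOver G₀ A →
      ∃ m : ℕ, 0 < m ∧ crossNumber A = (m : ℚ) ∧ sInf (DeltaOf G₀) ∣ m - 1 :=
  cross_numbers_integral_and_minDelta_divides_general G G₀ hcond
end
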